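/- arXiv:2505.10548 — 6 statements merged into one kernel-verified Lean document; each statement's English description precedes it below -/
import Mathlib

section
/- If M is a positive semidefinite matrix and A is a self-adjoint subalgebra (a *-subalgebra closed under conjugate transpose) of the algebra of n×n complex matrices, then the orthogonal projection of M onto A (with respect to the trace inner product) is also positive semidefinite. -/
/-!
Since `S` is closed under `ᴴ` and `M` is Hermitian, `(M - M')ᴴ = M - M'ᴴ` is orthogonal to `S`
as well, so `M'ᴴ - M'` lies in `S` and is orthogonal to `S`, hence vanishes. The negative part
`N = M'⁻` is a continuous function of `M'` vanishing at `0`, so it lies in the (closed) algebra `S`,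
and orthogonality gives `0 ≤ tr (M N) = tr (M' N) = -tr (N Nᴴ) ≤ 0`. Thus `N = 0`, i.e. `0 ≤ M'`.
-/

open Matrix ComplexOrder
open scoped MatrixOrder

variable {m 𝕜 : Type*} [Fintype m] [RCLike 𝕜]

lemma Matrix.PosSemidef.trace_mul_nonneg [DecidableEq m] {A B : Matrix m m 𝕜}
    (hA : A.PosSemidef) (hB : B.PosSemidef) : 0 ≤ (A * B).trace := by
  obtain ⟨C, rfl⟩ := CStarAlgebra.nonneg_iff_eq_star_mul_self.mp hB.nonneg
  rw [star_eq_conjTranspose, ← Matrix.mul_assoc, trace_mul_cycle]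
  exact (hA.mul_mul_conjTranspose_same C).trace_nonneg

namespace NonUnitalStarSubalgebra

variable (S : NonUnitalStarSubalgebra 𝕜 (Matrix m m 𝕜))

instance isClosed_coe_matrix : IsClosed (S : Set (Matrix m m 𝕜)) :=
  S.toNonUnitalSubalgebra.toSubmodule.closed_of_finiteDimensional

variable {S}

lemma trace_conjTranspose_mul_conjTranspose_eq_zero {Y : Matrix m m 𝕜}
    (hY : ∀ X ∈ S, (Y * Xᴴ).trace = 0) : ∀ X ∈ S, (Yᴴ * Xᴴ).trace = 0 := by
  intro X hX
  have h := hY (star X) (star_mem hX)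
  rw [star_eq_conjTranspose, conjTranspose_conjTranspose] at h
  rw [← conjTranspose_mul, trace_conjTranspose, trace_mul_comm, h, star_zero]

lemma eq_zero_of_forall_trace_mul_conjTranspose_eq_zero {Y : Matrix m m 𝕜} (hYS : Y ∈ S)
    (hY : ∀ X ∈ S, (Y * Xᴴ).trace = 0) : Y = 0 :=
  trace_mul_conjTranspose_self_eq_zero_iff.mp (hY Y hYS)

lemma isHermitian_of_forall_trace_sub_mul_conjTranspose_eq_zero {M M' : Matrix m m 𝕜}
    (hM : M.IsHermitian) (hM'S : M' ∈ S) (hproj : ∀ X ∈ S, ((M - M') * Xᴴ).trace = 0) :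
    M'.IsHermitian := by
  have hD : M'ᴴ - M' = (M - M') - (M - M')ᴴ := by
    rw [conjTranspose_sub, hM.eq]
    abel
  have hDS : M'ᴴ - M' ∈ S := sub_mem (star_mem hM'S) hM'S
  refine sub_eq_zero.mp (eq_zero_of_forall_trace_mul_conjTranspose_eq_zero hDS fun X hX ↦ ?_)
  rw [hD, sub_mul, trace_sub, hproj X hX, trace_conjTranspose_mul_conjTranspose_eq_zero hproj X hX,
    sub_zero]

lemma negPart_eq_zero_of_forall_trace_sub_mul_conjTranspose_eq_zero [DecidableEq m]
    {M M' : Matrix m m 𝕜} (hM : M.PosSemidef) (hM'S : M' ∈ S) (hM' : M'.IsHermitian)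
    (hproj : ∀ X ∈ S, ((M - M') * Xᴴ).trace = 0) : M'⁻ = 0 := by
  set N := M'⁻
  have hNS : N ∈ S := cfcₙ_mem (𝕜 := ℝ) (𝕜' := 𝕜) _ hM'S
  have hN : N.PosSemidef := (CFC.negPart_nonneg M').posSemidef
  have htrace : (M * N).trace = -(N * Nᴴ).trace := by
    have h := hproj N hNS
    rw [sub_mul, trace_sub, sub_eq_zero, hN.isHermitian.eq] at h
    rw [h, ← CFC.posPart_sub_negPart M' hM'.isSelfAdjoint, sub_mul, CFC.posPart_mul_negPart,
      zero_sub, trace_neg, hN.isHermitian.eq]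
  have hzero : (N * Nᴴ).trace = 0 :=
    le_antisymm (neg_nonneg.mp (htrace ▸ hM.trace_mul_nonneg hN))
      (posSemidef_self_mul_conjTranspose N).trace_nonneg
  exact trace_mul_conjTranspose_self_eq_zero_iff.mp hzero

end NonUnitalStarSubalgebra

/-- If `M` is a positive semidefinite complex matrix and `S` is a *-subalgebra of the
n×n complex matrices (a linear subspace closed under multiplication and conjugate
transposition), then the orthogonal projection `M'` of `M` onto `S` with respect to the
trace inner product `⟨X, Y⟩ = tr (X Yᴴ)` (characterized by `M' ∈ S` and `M - M' ⊥ S`)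
is also positive semidefinite. -/
theorem psd_projection_onto_star_subalgebra {n : ℕ}
    (S : NonUnitalStarSubalgebra ℂ (Matrix (Fin n) (Fin n) ℂ))
    (M M' : Matrix (Fin n) (Fin n) ℂ)
    (hM : M.PosSemidef)
    (hM'mem : M' ∈ S)
    (hproj : ∀ X ∈ S, ((M - M') * Xᴴ).trace = 0) :
    M'.PosSemidef := by
  have hM' : M'.IsHermitian :=
    S.isHermitian_of_forall_trace_sub_mul_conjTranspose_eq_zero hM.isHermitian hM'mem hproj
  rw [← nonneg_iff_posSemidef, ← CFC.negPart_eq_zero_iff M' hM'.isSelfAdjoint]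
  exact S.negPart_eq_zero_of_forall_trace_sub_mul_conjTranspose_eq_zero hM hM'mem hM' hproj
end

section
/- Let G = (V,E) be a graph with Laplacian L. Let η(G) = max (1/4)⟨L,M⟩ over all M ⪰ 0 with diag(M) = 1, and let η°(G) = min μ over all pairs (N,μ) with N ⪰ 0, diag(N) = μ·1, μ ≥ 0, and N_{ii} + N_{jj} − 2N_{ij} ≥ 4 for every edge ij. Then |E| ≤ η(G)·η°(G). -/
open Matrix Finset

section Aux

variable {V : Type*} [Fintype V] [DecidableEq V]

lemma psd_entry_sum_nonneg {M : Matrix V V ℝ} (hM : M.PosSemidef) (u v : V) :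
    0 ≤ M u u + M v v + M u v + M v u := by
  have h := hM.dotProduct_mulVec_nonneg (Pi.single u 1 + Pi.single v 1)
  simp only [star_trivial, mulVec_add, mulVec_single, dotProduct_add, add_dotProduct,
    single_dotProduct, mul_one, one_mul, Pi.add_apply, MulOpposite.op_one, one_smul,
    Matrix.col_apply] at h
  linarith

lemma psd_symm {M : Matrix V V ℝ} (hM : M.PosSemidef) (u v : V) : M u v = M v u := by
  have := congrFun (congrFun hM.1 u) v
  simpa [Matrix.conjTranspose_apply] using this.symm

lemma smul_posSemidef {M : Matrix V V ℝ} (hM : M.PosSemidef) {c : ℝ} (hc : 0 ≤ c) :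
    (c • M).PosSemidef := by
  refine ⟨?_, fun x => ?_⟩
  · unfold Matrix.IsHermitian
    rw [conjTranspose_smul, hM.1]
    simp
  · exact (hM.smul hc).2 x

variable (G : SimpleGraph V) [DecidableRel G.Adj]

lemma adj_double_sum_one :
    ∑ u : V, ∑ v : V, (if G.Adj u v then (1 : ℝ) else 0)
      = 2 * (G.edgeFinset.card : ℝ) := by
  have h : ∀ u : V, ∑ v : V, (if G.Adj u v then (1 : ℝ) else 0) = (G.degree u : ℝ) :=
    fun u => (G.degree_eq_sum_if_adj u).symm
  rw [Finset.sum_congr rfl fun u _ => h u]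
  have h2 : ∑ u : V, (G.degree u : ℝ) = ((∑ u : V, G.degree u : ℕ) : ℝ) := by push_cast; rfl
  rw [h2, G.sum_degrees_eq_twice_card_edges]
  push_cast
  ring

lemma trace_lap_mul (M : Matrix V V ℝ) :
    (G.lapMatrix ℝ * Mᵀ).trace
      = ∑ u : V, ∑ v : V, (if G.Adj u v then M u u - M u v else 0) := by
  simp only [Matrix.trace, Matrix.diag_apply, Matrix.mul_apply, Matrix.transpose_apply]
  refine Finset.sum_congr rfl fun u _ => ?_
  have hl : ∀ v : V, G.lapMatrix ℝ u v
      = (if u = v then (G.degree u : ℝ) else 0) - (if G.Adj u v then 1 else 0) := by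
    intro v
    simp [SimpleGraph.lapMatrix, SimpleGraph.degMatrix, Matrix.diagonal_apply,
      Matrix.sub_apply]
  simp_rw [hl, sub_mul, ite_mul, one_mul, zero_mul]
  rw [Finset.sum_sub_distrib, Finset.sum_ite_eq (Finset.univ : Finset V) u (fun v => (G.degree u : ℝ) * M u v)]
  simp only [Finset.mem_univ, if_true]
  have h1 : (G.degree u : ℝ) * M u u = ∑ v : V, (if G.Adj u v then M u u else 0) := by
    rw [G.degree_eq_sum_if_adj (R := ℝ) u, Finset.sum_mul]
    refine Finset.sum_congr rfl fun v _ => ?_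
    split <;> simp
  rw [h1, ← Finset.sum_sub_distrib]
  refine Finset.sum_congr rfl fun v _ => ?_
  split <;> simp

lemma trace_lap_mul_symm {M : Matrix V V ℝ} (hsym : ∀ u v, M u v = M v u) :
    (G.lapMatrix ℝ * Mᵀ).trace
      = (1 / 2) * ∑ u : V, ∑ v : V,
          (if G.Adj u v then M u u + M v v - 2 * M u v else 0) := by
  rw [trace_lap_mul]
  have hswap : ∑ u : V, ∑ v : V, (if G.Adj u v then M u u - M u v else 0)
      = ∑ u : V, ∑ v : V, (if G.Adj u v then M v v - M u v else 0) := by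
    rw [Finset.sum_comm]
    refine Finset.sum_congr rfl fun u _ => Finset.sum_congr rfl fun v _ => ?_
    rw [hsym v u]
    exact if_congr (G.adj_comm v u) rfl rfl
  have key : ∑ u : V, ∑ v : V, (if G.Adj u v then M u u + M v v - 2 * M u v else 0)
      = ∑ u : V, ∑ v : V, (if G.Adj u v then M u u - M u v else 0)
        + ∑ u : V, ∑ v : V, (if G.Adj u v then M v v - M u v else 0) := by
    rw [← Finset.sum_add_distrib]
    refine Finset.sum_congr rfl fun u _ => ?_
    rw [← Finset.sum_add_distrib]
    refine Finset.sum_congr rfl fun v _ => ?_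
    split <;> ring
  rw [key, ← hswap]
  ring

end Aux

/-- Weak gauge duality for the Goemans–Williamson SDP: for a simple graph `G = (V, E)`
with Laplacian `L`, with `η(G) = sup {(1/4)⟨L, M⟩ : M ⪰ 0, diag M = 1}` and
`η°(G) = inf {μ : μ ≥ 0, N ⪰ 0, diag N = μ•1, N_{uu} + N_{vv} - 2 N_{uv} ≥ 4 on edges}`,
we have `|E| ≤ η(G) · η°(G)`. -/
theorem card_edges_le_eta_mul_eta_dual
    {V : Type*} [Fintype V] [DecidableEq V]
    (G : SimpleGraph V) [DecidableRel G.Adj] :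
    (G.edgeFinset.card : ℝ) ≤
      sSup {r : ℝ | ∃ M : Matrix V V ℝ, M.PosSemidef ∧ (∀ v, M v v = 1) ∧
          r = (1 / 4) * (G.lapMatrix ℝ * Mᵀ).trace} *
      sInf {μ : ℝ | 0 ≤ μ ∧ ∃ N : Matrix V V ℝ, N.PosSemidef ∧ (∀ v, N v v = μ) ∧
          ∀ u v, G.Adj u v → N u u + N v v - 2 * N u v ≥ 4} := by
  set S := {r : ℝ | ∃ M : Matrix V V ℝ, M.PosSemidef ∧ (∀ v, M v v = 1) ∧
      r = (1 / 4) * (G.lapMatrix ℝ * Mᵀ).trace} with hS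
  set T := {μ : ℝ | 0 ≤ μ ∧ ∃ N : Matrix V V ℝ, N.PosSemidef ∧ (∀ v, N v v = μ) ∧
      ∀ u v, G.Adj u v → N u u + N v v - 2 * N u v ≥ 4} with hT
  set E : ℝ := (G.edgeFinset.card : ℝ) with hE
  have hE0 : 0 ≤ E := by positivity
  -- S is nonempty: the identity matrix is feasible
  have hSne : (E / 2) ∈ S := by
    refine ⟨1, Matrix.PosSemidef.one, fun v => by simp, ?_⟩
    rw [trace_lap_mul_symm G (M := (1 : Matrix V V ℝ))
      (fun u v => by simp [Matrix.one_apply, eq_comm])]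
    have : ∑ u : V, ∑ v : V,
        (if G.Adj u v then (1 : Matrix V V ℝ) u u + (1 : Matrix V V ℝ) v v
          - 2 * (1 : Matrix V V ℝ) u v else 0)
        = ∑ u : V, ∑ v : V, (if G.Adj u v then (2 : ℝ) else 0) := by
      refine Finset.sum_congr rfl fun u _ => Finset.sum_congr rfl fun v _ => ?_
      by_cases h : G.Adj u v
      · have hne : u ≠ v := G.ne_of_adj h
        simp [Matrix.one_apply, hne, h]
        norm_num
      · simp [h]
    rw [this]
    have h2 : ∑ u : V, ∑ v : V, (if G.Adj u v then (2 : ℝ) else 0)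
        = 2 * ∑ u : V, ∑ v : V, (if G.Adj u v then (1 : ℝ) else 0) := by
      rw [Finset.mul_sum]
      refine Finset.sum_congr rfl fun u _ => ?_
      rw [Finset.mul_sum]
      refine Finset.sum_congr rfl fun v _ => ?_
      split <;> ring
    rw [h2, adj_double_sum_one]
    ring
  -- S is bounded above by E
  have hSbdd : ∀ r ∈ S, r ≤ E := by
    rintro r ⟨M, hM, hdiag, hr⟩
    have hsym := psd_symm hM
    rw [hr, trace_lap_mul_symm G hsym]
    have hbound : ∑ u : V, ∑ v : V, (if G.Adj u v then M u u + M v v - 2 * M u v else 0)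
        ≤ ∑ u : V, ∑ v : V, (if G.Adj u v then (4 : ℝ) else 0) := by
      refine Finset.sum_le_sum fun u _ => Finset.sum_le_sum fun v _ => ?_
      by_cases h : G.Adj u v
      · have hps := psd_entry_sum_nonneg hM u v
        rw [hdiag u, hdiag v] at hps
        rw [if_pos h, if_pos h, hdiag u, hdiag v]
        linarith [hsym u v]
      · simp [h]
    have h4 : ∑ u : V, ∑ v : V, (if G.Adj u v then (4 : ℝ) else 0)
        = 4 * ∑ u : V, ∑ v : V, (if G.Adj u v then (1 : ℝ) else 0) := by
      rw [Finset.mul_sum]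
      refine Finset.sum_congr rfl fun u _ => ?_
      rw [Finset.mul_sum]
      refine Finset.sum_congr rfl fun v _ => ?_
      split <;> ring
    rw [h4, adj_double_sum_one] at hbound
    linarith
  have hBdd : BddAbove S := ⟨E, fun r hr => hSbdd r hr⟩
  set η : ℝ := sSup S with hη
  have hη_ge : E / 2 ≤ η := le_csSup hBdd hSne
  have hη0 : 0 ≤ η := le_trans (by positivity) hη_ge
  -- T is nonempty: μ = 2 with N = 2 • 1
  have hTne : (2 : ℝ) ∈ T := by
    refine ⟨by norm_num, (2 : ℝ) • 1, smul_posSemidef Matrix.PosSemidef.one (by norm_num),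
      fun v => by simp, fun u v huv => ?_⟩
    have hne : u ≠ v := G.ne_of_adj huv
    simp [Matrix.one_apply, hne]
    norm_num
  -- key: for every μ ∈ T, E ≤ η * μ
  have key : ∀ μ ∈ T, E ≤ η * μ := by
    rintro μ ⟨hμ0, N, hN, hdiag, hedge⟩
    rcases eq_or_lt_of_le hE0 with hEzero | hEpos
    · rw [← hEzero]; positivity
    rcases eq_or_lt_of_le hμ0 with hμzero | hμpos
    · -- μ = 0 with an edge: contradiction
      exfalso
      have hcard : 0 < G.edgeFinset.card := by rw [hE] at hEpos; exact_mod_cast hEpos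
      obtain ⟨e, he⟩ := Finset.card_pos.mp hcard
      induction e with
      | _ u v =>
        rw [SimpleGraph.mem_edgeFinset, SimpleGraph.mem_edgeSet] at he
        have h1 := hedge u v he
        have h2 := psd_entry_sum_nonneg hN u v
        have h3 := psd_symm hN u v
        rw [hdiag u, hdiag v, ← hμzero] at h1 h2
        linarith
    · -- μ > 0: N/μ is feasible for S
      set M := μ⁻¹ • N with hM
      have hMpsd : M.PosSemidef := smul_posSemidef hN (by positivity)
      have hMdiag : ∀ v, M v v = 1 := fun v => by
        simp [hM, hdiag v]
        field_simp
      have hmem : (1 / 4) * (G.lapMatrix ℝ * Mᵀ).trace ∈ S :=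
        ⟨M, hMpsd, hMdiag, rfl⟩
      have hle : (1 / 4) * (G.lapMatrix ℝ * Mᵀ).trace ≤ η := le_csSup hBdd hmem
      -- lower bound on the trace
      have hMsym : ∀ u v, M u v = M v u := fun u v => by
        simp [hM, psd_symm hN u v]
      have htr : (G.lapMatrix ℝ * Mᵀ).trace
          = (1 / 2) * ∑ u : V, ∑ v : V,
              (if G.Adj u v then M u u + M v v - 2 * M u v else 0) :=
        trace_lap_mul_symm G hMsym
      have hlb : ∑ u : V, ∑ v : V, (if G.Adj u v then (4 / μ : ℝ) else 0)
          ≤ ∑ u : V, ∑ v : V, (if G.Adj u v then M u u + M v v - 2 * M u v else 0) := by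
        refine Finset.sum_le_sum fun u _ => Finset.sum_le_sum fun v _ => ?_
        by_cases h : G.Adj u v
        · rw [if_pos h, if_pos h]
          have h1 := hedge u v h
          have : M u u + M v v - 2 * M u v = μ⁻¹ * (N u u + N v v - 2 * N u v) := by
            simp [hM]; ring
          rw [this]
          rw [div_eq_mul_inv, mul_comm]
          have : (0:ℝ) < μ⁻¹ := by positivity
          nlinarith
        · simp [h]
      have h4μ : ∑ u : V, ∑ v : V, (if G.Adj u v then (4 / μ : ℝ) else 0)
          = (4 / μ) * ∑ u : V, ∑ v : V, (if G.Adj u v then (1 : ℝ) else 0) := by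
        rw [Finset.mul_sum]
        refine Finset.sum_congr rfl fun u _ => ?_
        rw [Finset.mul_sum]
        refine Finset.sum_congr rfl fun v _ => ?_
        split <;> ring
      rw [h4μ, adj_double_sum_one] at hlb
      have hEled : E / μ ≤ η := by
        calc E / μ = (1/4) * ((1/2) * ((4 / μ) * (2 * E))) := by field_simp
        _ ≤ (1/4) * (G.lapMatrix ℝ * Mᵀ).trace := by rw [htr]; nlinarith
        _ ≤ η := hle
      rw [div_le_iff₀ hμpos] at hEled
      linarith [mul_comm η μ]
  -- conclude
  rcases eq_or_lt_of_le hη0 with hηzero | hηpos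
  · have h2 := key 2 hTne
    rw [← hηzero] at h2 ⊢
    rw [zero_mul] at h2 ⊢
    linarith
  · have hτ_ge : E / η ≤ sInf T := by
      refine le_csInf ⟨2, hTne⟩ fun μ hμ => ?_
      rw [div_le_iff₀ hηpos]
      have := key μ hμ
      linarith [mul_comm μ η]
    rw [div_le_iff₀ hηpos] at hτ_ge
    linarith [mul_comm (sInf T) η]
end

section
/- Let G be a k-regular graph on n vertices whose adjacency matrix A belongs to a symmetric association scheme, and let λ_min be the smallest eigenvalue of A. Then η°(G) = 2k/(k − λ_min), where η°(G) = min{ μ : μ ≥ 0, N ⪰ 0, diag(N) = μ·1, N_{ii}+N_{jj}−2N_{ij} ≥ 4 for all edges ij }. -/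
/-!
Let `λ = min_l P l i₁`, the least of the eigenvalues of `A = A i₁` on the primitive idempotents,
attained at `E = E l₀`. Since `A - λ • 1 = ∑ l, (P l i₁ - λ) • E l` is positive semidefinite and
`A * E = λ • E` with `E ≠ 0`, `λ` is the least eigenvalue of `A`.

Lower bound: for a feasible `(μ, N)`, summing the edge constraints over ordered adjacent pairs gives
`4nk ≤ 2 (k tr N - tr (A N))`, while `tr ((A - λ • 1) N) ≥ 0` gives `tr (A N) ≥ λ n μ`; hence
`2k ≤ μ (k - λ)`.

Upper bound: by the second eigenmatrix `Q`, `E` has a constant diagonal `a > 0` and a constant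
value `b` on edges, and the diagonal of `A * E = λ • E` reads `k b = λ a`. A multiple of `E` with
diagonal `2k / (k - λ)` is therefore feasible.
-/

open Matrix

theorem spectrum.mem_of_mul_eq_smul {R A : Type*} [CommSemiring R] [Ring A] [Algebra R A]
    {a e : A} {r : R} (h : a * e = r • e) (he : e ≠ 0) : r ∈ spectrum R a := by
  intro hu
  apply he
  have : (algebraMap R A r - a) * e = 0 := by
    rw [sub_mul, h, Algebra.algebraMap_eq_smul_one, smul_one_mul, sub_self]
  simpa using hu.mul_left_cancel (this.trans (mul_zero _).symm)

namespace Matrix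

theorem sum_smul_apply_of_apply_eq_one {ι m n : Type*} [Fintype ι] [DecidableEq ι]
    {A : ι → Matrix m n ℝ} (hA01 : ∀ i u v, A i u v = 0 ∨ A i u v = 1)
    (hAsum : ∀ u v, ∑ i, A i u v = 1) (q : ι → ℝ) {j : ι} {u : m} {v : n} (h : A j u v = 1) :
    (∑ l, q l • A l) u v = q j := by
  have hA0 : ∀ i ≠ j, A i u v = 0 := by
    intro i hi
    have hle : A i u v + A j u v ≤ ∑ l, A l u v := by
      rw [← Finset.sum_pair (f := fun l => A l u v) hi]
      exact Finset.sum_le_univ_sum_of_nonneg fun l => by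
        rcases hA01 l u v with h0 | h1 <;> simp [*]
    rcases hA01 i u v with h0 | h1 <;> linarith [hAsum u v]
  rw [sum_apply, Finset.sum_eq_single j (fun i _ hi => by simp [hA0 i hi]) (by simp)]
  simp [h]

variable {n : Type*} [Fintype n]

theorem trace_eq_card_mul_of_diag_eq {N : Matrix n n ℝ} {μ : ℝ} (h : ∀ v, N v v = μ) :
    N.trace = Fintype.card n * μ := by
  simp [trace, h]

theorem posSemidef_of_transpose_eq_of_mul_self_eq {E : Matrix n n ℝ} (hsym : Eᵀ = E)
    (hidem : E * E = E) : E.PosSemidef := by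
  have hE : E = Eᴴ * E := by rw [conjTranspose_eq_transpose_of_trivial, hsym, hidem]
  exact hE ▸ posSemidef_conjTranspose_mul_self E

theorem PosSemidef.trace_pos {E : Matrix n n ℝ} (hE : E.PosSemidef) (hne : E ≠ 0) :
    0 < E.trace :=
  hE.trace_nonneg.lt_of_ne (Ne.symm (hE.trace_eq_zero_iff.not.mpr hne))

variable [DecidableEq n]

theorem PosSemidef.trace_mul_nonneg_s10 {M N : Matrix n n ℝ} (hM : M.PosSemidef)
    (hN : N.PosSemidef) : 0 ≤ (M * N).trace := by
  open scoped MatrixOrder in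
  obtain ⟨B, rfl⟩ := CStarAlgebra.nonneg_iff_eq_star_mul_self.mp hN.nonneg
  rw [← mul_assoc, trace_mul_cycle]
  exact (hM.mul_mul_conjTranspose_same B).trace_nonneg

open scoped MatrixOrder in
theorem IsHermitian.posSemidef_sub_smul_one_iff {M : Matrix n n ℝ} (hM : M.IsHermitian)
    {t : ℝ} : (M - t • 1).PosSemidef ↔ ∀ i, t ≤ hM.eigenvalues i := by
  rw [← le_iff, ← Algebra.algebraMap_eq_smul_one, algebraMap_le_iff_le_spectrum hM.isSelfAdjoint,
    hM.spectrum_real_eq_range_eigenvalues, Set.forall_mem_range]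

theorem IsHermitian.iInf_eigenvalues_eq {M E : Matrix n n ℝ} (hM : M.IsHermitian) {t : ℝ}
    (hpsd : (M - t • 1).PosSemidef) (hME : M * E = t • E) (hE : E ≠ 0) :
    ⨅ i, hM.eigenvalues i = t := by
  have ht : t ∈ Set.range hM.eigenvalues :=
    hM.spectrum_real_eq_range_eigenvalues ▸ spectrum.mem_of_mul_eq_smul hME hE
  exact IsLeast.csInf_eq ⟨ht, Set.forall_mem_range.mpr (hM.posSemidef_sub_smul_one_iff.mp hpsd)⟩

section OrthogonalIdempotents

variable {ι : Type*} [Fintype ι] [DecidableEq ι] {E : ι → Matrix n n ℝ}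

theorem sum_smul_mul_of_mul_eq_ite (hEmul : ∀ i j, E i * E j = if i = j then E i else 0)
    (p : ι → ℝ) (l : ι) : (∑ m, p m • E m) * E l = p l • E l := by
  simp [Finset.sum_mul, hEmul]

theorem posSemidef_sum_smul_sub_smul_one (hEmul : ∀ i j, E i * E j = if i = j then E i else 0)
    (hEsym : ∀ i, (E i)ᵀ = E i) (hEsum : ∑ i, E i = 1) {p : ι → ℝ} {t : ℝ}
    (ht : ∀ l, t ≤ p l) : (∑ l, p l • E l - t • 1).PosSemidef := by
  rw [← hEsum, Finset.smul_sum, ← Finset.sum_sub_distrib]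
  refine posSemidef_sum _ fun l _ => ?_
  rw [← sub_smul]
  exact (posSemidef_of_transpose_eq_of_mul_self_eq (hEsym l) (by simpa using hEmul l l)).smul
    (sub_nonneg.mpr (ht l))

end OrthogonalIdempotents

end Matrix

namespace SimpleGraph

variable {V : Type*} (G : SimpleGraph V) [DecidableRel G.Adj]

def IsEtaDualFeasible [Fintype V] (μ : ℝ) : Prop :=
  0 ≤ μ ∧ ∃ N : Matrix V V ℝ, N.PosSemidef ∧ (∀ v, N v v = μ) ∧
    ∀ u v, G.Adj u v → N u u + N v v - 2 * N u v ≥ 4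

variable {G}

theorem nonpos_of_posSemidef_adjMatrix_sub_smul_one [DecidableEq V] [Nonempty V] {t : ℝ}
    (ht : (G.adjMatrix ℝ - t • 1).PosSemidef) : t ≤ 0 := by
  obtain ⟨u⟩ := ‹Nonempty V›
  simpa using ht.diag_nonneg (i := u)

variable [Fintype V] {k : ℕ}

theorem IsRegularOfDegree.pos_of_adj (hreg : G.IsRegularOfDegree k) {u v : V} (huv : G.Adj u v) :
    0 < k :=
  hreg u ▸ (G.degree_pos_iff_exists_adj u).mpr ⟨v, huv⟩

theorem IsRegularOfDegree.sum_adjMatrix_apply (hreg : G.IsRegularOfDegree k) (u : V) :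
    ∑ v, G.adjMatrix ℝ u v = k := by
  simp [← hreg u, degree, neighborFinset_eq_filter]

theorem IsRegularOfDegree.sum_adjMatrix_mul_eq (hreg : G.IsRegularOfDegree k)
    (N : Matrix V V ℝ) :
    ∑ u, ∑ v, G.adjMatrix ℝ u v * (N u u + N v v - 2 * N u v)
      = 2 * (k * N.trace - (G.adjMatrix ℝ * N).trace) := by
  have hrow : ∀ u, ∑ v, G.adjMatrix ℝ u v * N u u = k * N u u := fun u => by
    rw [← Finset.sum_mul, hreg.sum_adjMatrix_apply]
  have hcol : ∀ v, ∑ u, G.adjMatrix ℝ u v * N v v = k * N v v := fun v => by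
    simp_rw [← Finset.sum_mul, ← transpose_apply (G.adjMatrix ℝ) v, transpose_adjMatrix,
      hreg.sum_adjMatrix_apply]
  have hmul : (G.adjMatrix ℝ * N).trace = ∑ u, ∑ v, G.adjMatrix ℝ u v * N u v := by
    simp only [trace, diag_apply, mul_apply]
    rw [Finset.sum_comm]
    simp_rw [G.isSymm_adjMatrix.apply]
  simp only [mul_sub, mul_add, Finset.sum_add_distrib, Finset.sum_sub_distrib, hrow]
  rw [Finset.sum_comm (f := fun u v => G.adjMatrix ℝ u v * N v v)]
  simp only [hcol, hmul, ← Finset.mul_sum]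
  simp only [trace, diag_apply, mul_left_comm _ (2 : ℝ), ← Finset.mul_sum]
  ring

theorem IsEtaDualFeasible.two_mul_le [DecidableEq V] [Nonempty V]
    (hreg : G.IsRegularOfDegree k) {t μ : ℝ} (ht : (G.adjMatrix ℝ - t • 1).PosSemidef)
    (hμ : G.IsEtaDualFeasible μ) : 2 * k ≤ μ * (k - t) := by
  obtain ⟨-, N, hN, hdiag, hedge⟩ := hμ
  have hspec : t * N.trace ≤ (G.adjMatrix ℝ * N).trace := by
    have := ht.trace_mul_nonneg_s10 hN
    rwa [sub_mul, trace_sub, smul_mul_assoc, one_mul, trace_smul, smul_eq_mul,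
      sub_nonneg] at this
  have hedges : 4 * (Fintype.card V * k) ≤ 2 * (k * N.trace - (G.adjMatrix ℝ * N).trace) := by
    rw [← hreg.sum_adjMatrix_mul_eq]
    calc 4 * (Fintype.card V * k : ℝ) = ∑ u : V, ∑ v, G.adjMatrix ℝ u v * 4 := by
          simp only [← Finset.sum_mul, hreg.sum_adjMatrix_apply, Finset.sum_const,
            Finset.card_univ, nsmul_eq_mul]
          ring
      _ ≤ _ := by
        refine Finset.sum_le_sum fun u _ => Finset.sum_le_sum fun v _ => ?_
        by_cases huv : G.Adj u v
        · simpa [huv] using hedge u v huv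
        · simp [huv]
  rw [trace_eq_card_mul_of_diag_eq hdiag] at hspec hedges
  refine le_of_mul_le_mul_left ?_ (by positivity : (0 : ℝ) < 2 * Fintype.card V)
  linarith

theorem isEtaDualFeasible_of_mul_eq_smul (hreg : G.IsRegularOfDegree k) {E : Matrix V V ℝ}
    {t a b : ℝ} (hE : E.PosSemidef) (hE0 : E ≠ 0) (hAE : G.adjMatrix ℝ * E = t • E)
    (hdiag : ∀ u, E u u = a) (hedge : ∀ u v, G.Adj u v → E u v = b) (htk : t < k) :
    G.IsEtaDualFeasible (2 * k / (k - t)) := by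
  have ha : 0 < a := by
    have := hE.trace_pos hE0
    rw [trace_eq_card_mul_of_diag_eq hdiag] at this
    exact pos_of_mul_pos_right this (by positivity)
  have hμ : 0 ≤ 2 * k / (k - t) := div_nonneg (by positivity) (sub_nonneg.mpr htk.le)
  refine ⟨hμ, (2 * k / (k - t) / a) • E, hE.smul (div_nonneg hμ ha.le), fun v => ?_,
    fun u v huv => ?_⟩
  · simp [hdiag, ha.ne']
  · have hk : (k : ℝ) ≠ 0 := by exact_mod_cast (hreg.pos_of_adj huv).ne'
    have hba : k * b = t * a := by
      have := congrFun (congrFun hAE u) u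
      rw [adjMatrix_mul_apply, Finset.sum_congr rfl fun w hw =>
        hedge w u ((G.mem_neighborFinset u w).mp hw).symm] at this
      simpa [hreg u, hdiag] using this
    have hb : b = t * a / k := by rw [eq_div_iff hk, mul_comm, hba]
    have hkt : (k : ℝ) - t ≠ 0 := (sub_pos.mpr htk).ne'
    simp only [Matrix.smul_apply, smul_eq_mul, hdiag, hedge u v huv, hb]
    exact le_of_eq (by field_simp; ring)

end SimpleGraph

theorem eta_dual_eq_of_association_scheme_general
    {V : Type*} [Fintype V] [DecidableEq V] (d : ℕ)
    (A E : Fin (d + 1) → Matrix V V ℝ)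
    (P Q : Matrix (Fin (d + 1)) (Fin (d + 1)) ℝ)
    (hA0 : A 0 = 1)
    (hA01 : ∀ i u v, A i u v = 0 ∨ A i u v = 1)
    (hAsum : ∀ u v, ∑ i, A i u v = 1)
    (hAne : ∀ i, A i ≠ 0)
    (hEsym : ∀ i, (E i)ᵀ = E i)
    (hEmul : ∀ i j, E i * E j = if i = j then E i else 0)
    (hEsum : ∑ i, E i = 1)
    (hEne : ∀ i, E i ≠ 0)
    (hP : ∀ i, A i = ∑ l, P l i • E l)
    (hQ : ∀ i, E i = (Fintype.card V : ℝ)⁻¹ • ∑ l, Q l i • A l)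
    (G : SimpleGraph V) [DecidableRel G.Adj]
    (k : ℕ) (hreg : G.IsRegularOfDegree k)
    (i₁ : Fin (d + 1)) (hi₁ : G.adjMatrix ℝ = A i₁)
    (hherm : (G.adjMatrix ℝ).IsHermitian) :
    sInf {μ : ℝ | 0 ≤ μ ∧ ∃ N : Matrix V V ℝ, N.PosSemidef ∧ (∀ v, N v v = μ) ∧
        ∀ u v, G.Adj u v → N u u + N v v - 2 * N u v ≥ 4}
      = 2 * (k : ℝ) / ((k : ℝ) - ⨅ i, hherm.eigenvalues i) := by
  obtain ⟨u₀, v₀, huv₀⟩ : ∃ u v, G.Adj u v := by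
    by_contra! h
    exact hAne i₁ (hi₁ ▸ Matrix.ext fun u v => by simp [h u v])
  have : Nonempty V := ⟨u₀⟩
  obtain ⟨l₀, hl₀⟩ := Finite.exists_min (P · i₁)
  have hAE : G.adjMatrix ℝ * E l₀ = P l₀ i₁ • E l₀ := by
    rw [hi₁, hP]
    exact sum_smul_mul_of_mul_eq_ite hEmul _ l₀
  have hApsd : (G.adjMatrix ℝ - P l₀ i₁ • 1).PosSemidef := by
    rw [hi₁, hP]
    exact posSemidef_sum_smul_sub_smul_one hEmul hEsym hEsum hl₀
  have hentry : ∀ j u v, A j u v = 1 → E l₀ u v = (Fintype.card V : ℝ)⁻¹ * Q j l₀ :=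
    fun j u v h => by
      rw [hQ, Matrix.smul_apply, sum_smul_apply_of_apply_eq_one hA01 hAsum _ h, smul_eq_mul]
  have htk : P l₀ i₁ < k := (G.nonpos_of_posSemidef_adjMatrix_sub_smul_one hApsd).trans_lt
    (by exact_mod_cast hreg.pos_of_adj huv₀)
  have hfeas : G.IsEtaDualFeasible (2 * k / (k - P l₀ i₁)) :=
    G.isEtaDualFeasible_of_mul_eq_smul hreg
      (posSemidef_of_transpose_eq_of_mul_self_eq (hEsym l₀) (by simpa using hEmul l₀ l₀))
      (hEne l₀) hAE (fun u => hentry 0 u u (by simp [hA0]))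
      (fun u v huv => hentry i₁ u v (by simp [← hi₁, huv])) htk
  rw [hherm.iInf_eigenvalues_eq hApsd hAE (hEne l₀)]
  exact IsLeast.csInf_eq ⟨hfeas, fun μ hμ =>
    (div_le_iff₀ (sub_pos.mpr htk)).mpr (SimpleGraph.IsEtaDualFeasible.two_mul_le hreg hApsd hμ)⟩

/-- Let `G` be a connected `k`-regular graph on `n` vertices whose adjacency matrix
belongs to a symmetric association scheme, and let `λ_min` be its smallest adjacency
eigenvalue. Then
`η°(G) = min {μ : μ ≥ 0, N ⪰ 0, diag N = μ•1, N_{uu} + N_{vv} - 2 N_{uv} ≥ 4 on edges}`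
equals `2 k / (k - λ_min)`. -/
theorem eta_dual_eq_of_association_scheme
    {V : Type*} [Fintype V] [DecidableEq V] (d : ℕ)
    (A E : Fin (d + 1) → Matrix V V ℝ)
    (P Q : Matrix (Fin (d + 1)) (Fin (d + 1)) ℝ)
    (hA0 : A 0 = 1)
    (hAsym : ∀ i, (A i)ᵀ = A i)
    (hA01 : ∀ i u v, A i u v = 0 ∨ A i u v = 1)
    (hAsum : ∀ u v, ∑ i, A i u v = 1)
    (hAne : ∀ i, A i ≠ 0)
    (hAmul : ∀ i j, A i * A j ∈ Submodule.span ℝ (Set.range A))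
    (hAcomm : ∀ i j, A i * A j = A j * A i)
    (hE0 : E 0 = (Fintype.card V : ℝ)⁻¹ • Matrix.of (fun _ _ => (1 : ℝ)))
    (hEsym : ∀ i, (E i)ᵀ = E i)
    (hEmul : ∀ i j, E i * E j = if i = j then E i else 0)
    (hEsum : ∑ i, E i = 1)
    (hEne : ∀ i, E i ≠ 0)
    (hP : ∀ i, A i = ∑ l, P l i • E l)
    (hQ : ∀ i, E i = (Fintype.card V : ℝ)⁻¹ • ∑ l, Q l i • A l)
    [Nonempty V]
    (G : SimpleGraph V) [DecidableRel G.Adj]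
    (k : ℕ) (hreg : G.IsRegularOfDegree k) (hconn : G.Connected)
    (i₁ : Fin (d + 1)) (hi₁ : G.adjMatrix ℝ = A i₁)
    (hherm : (G.adjMatrix ℝ).IsHermitian) :
    sInf {μ : ℝ | 0 ≤ μ ∧ ∃ N : Matrix V V ℝ, N.PosSemidef ∧ (∀ v, N v v = μ) ∧
        ∀ u v, G.Adj u v → N u u + N v v - 2 * N u v ≥ 4}
      = 2 * (k : ℝ) / ((k : ℝ) - ⨅ i, hherm.eigenvalues i) :=
  eta_dual_eq_of_association_scheme_general d A E P Q hA0 hA01 hAsum hAne hEsym hEmul hEsum hEne hP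
    hQ G k hreg i₁ hi₁ hherm
end

section
/- Let G_1, G_2 be graphs on the same n vertices whose adjacency matrices A_1, A_2 belong to a symmetric association scheme with first eigenmatrix P and degrees k_1, k_2. Then γ(G_1,G_2) := max{ ⟨(L+K)/2, M⟩ : M ⪰ 0, diag(M) = 1 } = (n/2)·((k_1 + k_2) + max_{0 ≤ l ≤ d} (P_{l2} − P_{l1})), where L = k_1 I − A_1 is the Laplacian of G_1 and K = k_2 I + A_2 is the signless Laplacian of G_2. -/
/-!
In the Bose–Mesner algebra, `L + K = ∑ₗ (k₁ + k₂ + P l 2 - P l 1) Eₗ` with the primitive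
idempotents `Eₗ`. For a feasible `M` the weights `tr (Eₗ M)` are nonnegative (both matrices
are positive semidefinite) and sum to `tr M = n`, so the objective is at most `n/2` times the
largest coefficient. Conversely each `Eₗ` has constant diagonal `Q 0 l / n`, because
`Eₗ = n⁻¹ ∑ᵢ Q i l Aᵢ` and only `A₀ = I` has a nonzero diagonal; rescaling the idempotent of the
largest coefficient gives a feasible `M` attaining the bound.
-/

open Matrix

namespace Matrix

variable {V : Type*} [Fintype V]

lemma IsSymm.posSemidef_of_isIdempotentElem {E : Matrix V V ℝ} (hE : E.IsSymm)
    (hEE : IsIdempotentElem E) : E.PosSemidef := by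
  have h : E = Eᴴ * E := by rw [conjTranspose_eq_transpose_of_trivial, hE.eq, hEE.eq]
  exact h ▸ posSemidef_conjTranspose_mul_self E

lemma PosSemidef.trace_mul_nonneg_of_isIdempotentElem {E M : Matrix V V ℝ} (hM : M.PosSemidef)
    (hE : E.IsSymm) (hEE : IsIdempotentElem E) : 0 ≤ (E * M).trace := by
  have h : (E * M).trace = (Eᴴ * M * E).trace := by
    rw [conjTranspose_eq_transpose_of_trivial, hE.eq, trace_mul_cycle, hEE.eq]
  exact h ▸ (hM.conjTranspose_mul_mul_same E).trace_nonneg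

lemma PosSemidef.trace_pos_of_ne_zero {A : Matrix V V ℝ} (hA : A.PosSemidef) (h : A ≠ 0) :
    0 < A.trace :=
  hA.trace_nonneg.lt_of_ne' (mt hA.trace_eq_zero_iff.mp h)

end Matrix

section DiagonalOfSpan

variable {V ι : Type*} [DecidableEq V] [Fintype ι] {A : ι → Matrix V V ℝ} {i₀ : ι}

lemma apply_self_eq_zero_of_ne (hA0 : A i₀ = 1) (hAnn : ∀ i v, 0 ≤ A i v v)
    (hAsum : ∀ v, ∑ i, A i v v = 1) {i : ι} (hi : i ≠ i₀) (v : V) : A i v v = 0 := by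
  classical
  have h := Finset.sum_le_sum_of_subset_of_nonneg (Finset.subset_univ {i, i₀})
    fun k _ _ => hAnn k v
  rw [Finset.sum_pair hi, hAsum, hA0, one_apply_eq] at h
  linarith [hAnn i v]

lemma sum_smul_apply_self (hA0 : A i₀ = 1) (hAnn : ∀ i v, 0 ≤ A i v v)
    (hAsum : ∀ v, ∑ i, A i v v = 1) (q : ι → ℝ) (v : V) :
    (∑ i, q i • A i) v v = q i₀ := by
  rw [Matrix.sum_apply, Finset.sum_eq_single i₀]
  · simp [hA0]
  · intro i _ hi
    simp [apply_self_eq_zero_of_ne hA0 hAnn hAsum hi v]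
  · simp

end DiagonalOfSpan

noncomputable def sdpValue {V : Type*} [Fintype V] (C : Matrix V V ℝ) : ℝ :=
  sSup {r : ℝ | ∃ M : Matrix V V ℝ, M.PosSemidef ∧ (∀ v, M v v = 1) ∧
    r = (C * Mᵀ).trace}

lemma OrthogonalIdempotents.sum_smul_mul_eq {R A ι : Type*} [CommSemiring R] [Semiring A]
    [Algebra R A] [Fintype ι] {e : ι → A} (he : OrthogonalIdempotents e) (c : ι → R)
    (j : ι) :
    (∑ l, c l • e l) * e j = c j • e j := by
  classical
  simp [Finset.sum_mul, he.mul_eq]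

section Spectral

variable {V ι : Type*} [Fintype V] [DecidableEq V] [Fintype ι]
  {E : ι → Matrix V V ℝ} {c : ι → ℝ} {j : ι}

lemma trace_sum_smul_mul_le (hE : CompleteOrthogonalIdempotents E) (hEsymm : ∀ l, (E l).IsSymm)
    (hj : ∀ l, c l ≤ c j) {M : Matrix V V ℝ} (hM : M.PosSemidef) :
    ((∑ l, c l • E l) * M).trace ≤ c j * M.trace :=
  calc ((∑ l, c l • E l) * M).trace = ∑ l, c l * (E l * M).trace := by
        simp only [Finset.sum_mul, trace_sum, smul_mul_assoc, trace_smul, smul_eq_mul]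
    _ ≤ ∑ l, c j * (E l * M).trace := Finset.sum_le_sum fun l _ =>
        mul_le_mul_of_nonneg_right (hj l)
          (hM.trace_mul_nonneg_of_isIdempotentElem (hEsymm l) (hE.idem l))
    _ = c j * M.trace := by
        rw [← Finset.mul_sum, ← trace_sum, ← Finset.sum_mul, hE.complete, one_mul]

theorem sdpValue_sum_smul_eq (hE : CompleteOrthogonalIdempotents E)
    (hEsymm : ∀ l, (E l).IsSymm) (hj : ∀ l, c l ≤ c j) {e : ℝ} (hdiag : ∀ v, E j v v = e)
    (hEj : E j ≠ 0) : sdpValue (∑ l, c l • E l) = Fintype.card V * c j := by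
  have htrace : (E j).trace = Fintype.card V * e := by simp [trace, hdiag]
  have hEpsd := (hEsymm j).posSemidef_of_isIdempotentElem (hE.idem j)
  have he : 0 < e :=
    pos_of_mul_pos_right (htrace ▸ hEpsd.trace_pos_of_ne_zero hEj) (by positivity)
  refine IsGreatest.csSup_eq ⟨⟨e⁻¹ • E j, hEpsd.smul (inv_nonneg.mpr he.le),
    fun v => by simp [hdiag, he.ne'], ?_⟩, ?_⟩
  · rw [transpose_smul, (hEsymm j).eq, Matrix.mul_smul, 
      hE.toOrthogonalIdempotents.sum_smul_mul_eq,
      trace_smul, trace_smul, htrace, smul_eq_mul, smul_eq_mul]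
    field_simp
  · rintro _ ⟨M, hM, hMdiag, rfl⟩
    have hMT : Mᵀ = M := by rw [← conjTranspose_eq_transpose_of_trivial]; exact hM.1
    have hMtrace : M.trace = Fintype.card V := by simp [trace, hMdiag]
    rw [hMT, mul_comm _ (c j), ← hMtrace]
    exact trace_sum_smul_mul_le hE hEsymm hj hM

end Spectral

theorem gamma_eq_of_association_scheme_general
    {V : Type*} [Fintype V] [DecidableEq V] (d : ℕ)
    (A E : Fin (d + 1) → Matrix V V ℝ)
    (P Q : Matrix (Fin (d + 1)) (Fin (d + 1)) ℝ)
    (hA0 : A 0 = 1)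
    (hA01 : ∀ i u v, A i u v = 0 ∨ A i u v = 1)
    (hAsum : ∀ u v, ∑ i, A i u v = 1)
    (hEsym : ∀ i, (E i)ᵀ = E i)
    (hEmul : ∀ i j, E i * E j = if i = j then E i else 0)
    (hEsum : ∑ i, E i = 1)
    (hEne : ∀ i, E i ≠ 0)
    (hP : ∀ i, A i = ∑ l, P l i • E l)
    (hQ : ∀ i, E i = (Fintype.card V : ℝ)⁻¹ • ∑ l, Q l i • A l) :
    sSup {r : ℝ | ∃ M : Matrix V V ℝ, M.PosSemidef ∧ (∀ v, M v v = 1) ∧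
        r = (((1 / 2 : ℝ) • ((P 0 1 • (1 : Matrix V V ℝ) - A 1) +
              (P 0 2 • (1 : Matrix V V ℝ) + A 2))) * Mᵀ).trace}
      = ((Fintype.card V : ℝ) / 2) * ((P 0 1 + P 0 2) + ⨆ l, (P l 2 - P l 1)) := by
  have hE : CompleteOrthogonalIdempotents E :=
    CompleteOrthogonalIdempotents.iff_ortho_complete.mpr
      ⟨fun i j hij => by simpa [hij] using hEmul i j, hEsum⟩
  have hAnn : ∀ i v, 0 ≤ A i v v := fun i v => by rcases hA01 i v v with h | h <;> simp [h]
  have hC : (1 / 2 : ℝ) • ((P 0 1 • (1 : Matrix V V ℝ) - A 1) +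
      (P 0 2 • (1 : Matrix V V ℝ) + A 2)) =
      ∑ l, ((P 0 1 + P 0 2 + (P l 2 - P l 1)) / 2) • E l := by
    rw [← hEsum, hP 1, hP 2]
    simp only [Finset.smul_sum, ← Finset.sum_sub_distrib, ← Finset.sum_add_distrib]
    exact Finset.sum_congr rfl fun l _ => by module
  obtain ⟨j, hj⟩ := exists_eq_ciSup_of_finite (f := fun l => P l 2 - P l 1)
  have hmax : ∀ l, P l 2 - P l 1 ≤ P j 2 - P j 1 :=
    fun l => hj ▸ le_ciSup (Set.finite_range (fun l => P l 2 - P l 1)).bddAbove l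
  have hdiag : ∀ v, E j v v = (Fintype.card V : ℝ)⁻¹ * Q 0 j := fun v => by
    rw [hQ j, Matrix.smul_apply, sum_smul_apply_self hA0 hAnn (fun v => hAsum v v), smul_eq_mul]
  change sdpValue _ = _
  rw [hC, sdpValue_sum_smul_eq hE hEsym (fun l => by linarith [hmax l]) hdiag (hEne j), ← hj]
  ring

/-- Let `G₁, G₂` be graphs on the same `n` vertices whose adjacency matrices `A 1, A 2`
belong to a symmetric association scheme with first eigenmatrix `P` and degrees
`k i = P 0 i`. With `L = k 1 • I - A 1` the Laplacian of `G₁` and `K = k 2 • I + A 2`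
the signless Laplacian of `G₂`,
`γ(G₁, G₂) = max {⟨(L + K)/2, M⟩ : M ⪰ 0, diag M = 1}`
equals `(n/2) ((k 1 + k 2) + max_l (P l 2 - P l 1))`. -/
theorem gamma_eq_of_association_scheme
    {V : Type*} [Fintype V] [DecidableEq V] (d : ℕ)
    (A E : Fin (d + 1) → Matrix V V ℝ)
    (P Q : Matrix (Fin (d + 1)) (Fin (d + 1)) ℝ)
    (hA0 : A 0 = 1)
    (hAsym : ∀ i, (A i)ᵀ = A i)
    (hA01 : ∀ i u v, A i u v = 0 ∨ A i u v = 1)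
    (hAsum : ∀ u v, ∑ i, A i u v = 1)
    (hAne : ∀ i, A i ≠ 0)
    (hAmul : ∀ i j, A i * A j ∈ Submodule.span ℝ (Set.range A))
    (hAcomm : ∀ i j, A i * A j = A j * A i)
    (hE0 : E 0 = (Fintype.card V : ℝ)⁻¹ • Matrix.of (fun _ _ => (1 : ℝ)))
    (hEsym : ∀ i, (E i)ᵀ = E i)
    (hEmul : ∀ i j, E i * E j = if i = j then E i else 0)
    (hEsum : ∑ i, E i = 1)
    (hEne : ∀ i, E i ≠ 0)
    (hP : ∀ i, A i = ∑ l, P l i • E l)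
    (hQ : ∀ i, E i = (Fintype.card V : ℝ)⁻¹ • ∑ l, Q l i • A l)
    (hd : 2 ≤ d)
    (G₁ G₂ : SimpleGraph V) [DecidableRel G₁.Adj] [DecidableRel G₂.Adj]
    (hA1 : G₁.adjMatrix ℝ = A 1) (hA2 : G₂.adjMatrix ℝ = A 2) :
    sSup {r : ℝ | ∃ M : Matrix V V ℝ, M.PosSemidef ∧ (∀ v, M v v = 1) ∧
        r = (((1 / 2 : ℝ) • ((P 0 1 • (1 : Matrix V V ℝ) - A 1) +
              (P 0 2 • (1 : Matrix V V ℝ) + A 2))) * Mᵀ).trace}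
      = ((Fintype.card V : ℝ) / 2) * ((P 0 1 + P 0 2) + ⨆ l, (P l 2 - P l 1)) :=
  gamma_eq_of_association_scheme_general d A E P Q hA0 hA01 hAsum hEsym hEmul hEsum hEne hP hQ
end

section
/- For the Paley graph on 9 vertices G_1 (strongly regular with parameters (9,4,1,2)) and its complement G_2, the gauge-dual program γ°(G_1,G_2), written as the linear program min{x_0 : Px ≥ 0, x_0 − x_1 ≥ 1, x_0 + x_2 ≥ 1} with P = [[1,4,4],[1,1,−2],[1,−2,1]], has optimal value strictly greater than (|E_1| + |E_2|)/γ(G_1,G_2) = 8/11; equivalently, the dual LP max{b+c : y ≥ 0, a,b,c ≥ 0, P^T y = b·e_1 − c·e_2 + (1−a−b−c)·e_0} admits the feasible solution y = (1/2, 1/2, 1/4) (with a = 0, b = 1/2, c = 1/4) of value 3/4 > 8/11. -/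
/-!
Weak duality with the certificate `y = (0, 1/4, 0)`, `a = 0`, `b = 1/4`, `c = 1/2`: adding
a quarter of the row `x 0 + x 1 - 2 x 2 ≥ 0` of `P x ≥ 0` to `b (x 0 - x 1 - 1) ≥ 0` and
`c (x 0 + x 2 - 1) ≥ 0` gives `x 0 ≥ 3/4 > 8/11`.
-/

open Matrix

section WeakDuality

variable {𝕜 : Type*} [Field 𝕜] [LinearOrder 𝕜] [IsStrictOrderedRing 𝕜]

theorem add_le_one_sub_mul_of_dual_feasible (P : Matrix (Fin 3) (Fin 3) 𝕜)
    {x y : Fin 3 → 𝕜} {a b c : 𝕜}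
    (hPx : ∀ l, 0 ≤ (P *ᵥ x) l) (h₁ : x 0 - x 1 ≥ 1) (h₂ : x 0 + x 2 ≥ 1)
    (hy : ∀ l, 0 ≤ y l) (hb : 0 ≤ b) (hc : 0 ≤ c)
    (hPy : Pᵀ *ᵥ y = b • (fun i => if i = 1 then (1 : 𝕜) else 0)
      - c • (fun i => if i = 2 then (1 : 𝕜) else 0)
      + (1 - a - b - c) • (fun i => if i = 0 then (1 : 𝕜) else 0)) :
    b + c ≤ (1 - a) * x 0 := by
  have hpair : 0 ≤ (Pᵀ *ᵥ y) ⬝ᵥ x := by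
    rw [mulVec_transpose, ← dotProduct_mulVec]
    exact dotProduct_nonneg_of_nonneg (fun l => hy l) (fun l => hPx l)
  have hexpand : (Pᵀ *ᵥ y) ⬝ᵥ x = (1 - a - b - c) * x 0 + b * x 1 - c * x 2 := by
    simp only [dotProduct, hPy, Fin.isValue, Pi.add_apply, Pi.sub_apply, Pi.smul_apply,
      smul_eq_mul, mul_ite, mul_one, mul_zero, Fin.sum_univ_three, zero_ne_one, ↓reduceIte,
      Fin.reduceEq, sub_self, zero_add, sub_zero, one_ne_zero, add_zero, zero_sub, neg_mul]
    ring
  nlinarith [mul_nonneg hb (sub_nonneg.2 h₁), mul_nonneg hc (sub_nonneg.2 h₂)]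

end WeakDuality

theorem paley9_transpose_mulVec_certificate :
    (!![1, 4, 4; 1, 1, -2; 1, -2, 1] : Matrix (Fin 3) (Fin 3) ℝ)ᵀ *ᵥ ![0, 1 / 4, 0]
      = (1 / 4 : ℝ) • (fun i => if i = 1 then (1 : ℝ) else 0)
        - (1 / 2 : ℝ) • (fun i => if i = 2 then (1 : ℝ) else 0)
        + (1 - 0 - 1 / 4 - 1 / 2 : ℝ) • (fun i => if i = 0 then (1 : ℝ) else 0) := by
  ext i
  fin_cases i <;> simp [mulVec, dotProduct, Fin.sum_univ_three] <;> norm_num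

/-- For the Paley graph on 9 vertices `G₁` (strongly regular with parameters (9,4,1,2))
and its complement `G₂`, the gauge-dual program `γ°(G₁, G₂)`, written as the linear
program `min {x 0 : P x ≥ 0, x 0 - x 1 ≥ 1, x 0 + x 2 ≥ 1}` with
`P = [[1,4,4],[1,1,-2],[1,-2,1]]`, has optimal value strictly greater than
`(|E₁| + |E₂|)/γ(G₁, G₂) = 8/11`: every feasible `x` has `x 0 > 8/11`. Equivalently, the
dual LP `max {b + c : y ≥ 0, a, b, c ≥ 0, Pᵀ y = b • e₁ - c • e₂ + (1 - a - b - c) • e₀}`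
admits a feasible solution of value `b + c = 3/4 > 8/11`. -/
theorem paley9_gamma_dual_gt :
    (∀ x : Fin 3 → ℝ,
        (∀ l, 0 ≤ (!![1, 4, 4; 1, 1, -2; 1, -2, 1] : Matrix (Fin 3) (Fin 3) ℝ).mulVec x l) →
        x 0 - x 1 ≥ 1 → x 0 + x 2 ≥ 1 → (8 : ℝ) / 11 < x 0) ∧
    (∃ (y : Fin 3 → ℝ) (a b c : ℝ), (∀ l, 0 ≤ y l) ∧ 0 ≤ a ∧ 0 ≤ b ∧ 0 ≤ c ∧
        (!![1, 4, 4; 1, 1, -2; 1, -2, 1] : Matrix (Fin 3) (Fin 3) ℝ)ᵀ.mulVec y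
          = b • (fun i => if i = 1 then (1 : ℝ) else 0)
            - c • (fun i => if i = 2 then (1 : ℝ) else 0)
            + (1 - a - b - c) • (fun i => if i = 0 then (1 : ℝ) else 0) ∧
        b + c = 3 / 4) := by
  have hy : ∀ l, (0 : ℝ) ≤ ![0, 1 / 4, 0] l := by
    intro l
    fin_cases l <;> norm_num
  refine ⟨fun x hPx h₁ h₂ => ?_, ⟨_, 0, 1 / 4, 1 / 2, hy, le_rfl, by norm_num, by norm_num,
    paley9_transpose_mulVec_certificate, by norm_num⟩⟩
  have hbound := add_le_one_sub_mul_of_dual_feasible _ hPx h₁ h₂ hy (by norm_num) (by norm_num)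
    paley9_transpose_mulVec_certificate
  linarith
end

section
/- Let G be a k-regular graph on n vertices whose adjacency matrix belongs to a symmetric association scheme, with smallest adjacency eigenvalue λ_min < k. Then the fractional cut-cover number satisfies fcc(G) ≥ 2k/(k − λ_min). -/
/-!
Hoffman's bound on cuts: if `x` is the `±1` vector of `S`, the Laplacian form of a `k`-regular
graph gives `4 |δ(S)| = xᵀ L x = k n - xᵀ A x ≤ (k - λ_min) n`. A fractional cut cover `y`
covers each of the `n k / 2` edges with weight at least one, so
`n k / 2 ≤ Σ_S y_S |δ(S)| ≤ (Σ_S y_S) (k - λ_min) n / 4`.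
-/

open Matrix

open scoped MatrixOrder in
theorem Matrix.IsHermitian.iInf_eigenvalues_mul_dotProduct_self_le {n : Type*} [Fintype n]
    [DecidableEq n] {A : Matrix n n ℝ} (hA : A.IsHermitian) (x : n → ℝ) :
    (⨅ i, hA.eigenvalues i) * (x ⬝ᵥ x) ≤ x ⬝ᵥ (A *ᵥ x) := by
  have hle : algebraMap ℝ (Matrix n n ℝ) (⨅ i, hA.eigenvalues i) ≤ A := by
    rw [algebraMap_le_iff_le_spectrum hA.isSelfAdjoint, hA.spectrum_real_eq_range_eigenvalues]
    rintro _ ⟨i, rfl⟩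
    exact ciInf_le (Set.finite_range _).bddBelow i
  simpa [sub_mulVec, dotProduct_sub, Algebra.algebraMap_eq_smul_one, smul_mulVec,
    dotProduct_smul] using (Matrix.le_iff.mp hle).dotProduct_mulVec_nonneg x

namespace Finset

variable {V : Type*} [DecidableEq V]

def signVector (S : Finset V) (u : V) : ℝ := if u ∈ S then 1 else -1

theorem signVector_mul_self (S : Finset V) (u : V) : S.signVector u * S.signVector u = 1 := by
  unfold signVector; split_ifs <;> norm_num

theorem signVector_dotProduct_self [Fintype V] (S : Finset V) :
    S.signVector ⬝ᵥ S.signVector = Fintype.card V := by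
  simp [dotProduct, signVector_mul_self]

end Finset

namespace SimpleGraph

variable {V : Type*} [Fintype V] [DecidableEq V] (G : SimpleGraph V)

def IsFractionalCutCover (y : Finset V → ℝ) : Prop :=
  (∀ S, 0 ≤ y S) ∧
    ∀ u v, G.Adj u v → 1 ≤ ∑ S : Finset V, if Xor (u ∈ S) (v ∈ S) then y S else 0

theorem isFractionalCutCover_one : G.IsFractionalCutCover 1 := by
  refine ⟨fun _ => zero_le_one, fun u v huv => ?_⟩
  have hsep : Xor (u ∈ ({u} : Finset V)) (v ∈ ({u} : Finset V)) := by
    simp [Xor, (G.ne_of_adj huv).symm]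
  calc (1 : ℝ) = if Xor (u ∈ ({u} : Finset V)) (v ∈ ({u} : Finset V)) then 1 else 0 := by
        rw [if_pos hsep]
    _ ≤ ∑ S : Finset V, if Xor (u ∈ S) (v ∈ S) then (1 : Finset V → ℝ) S else 0 :=
        Finset.single_le_sum (f := fun S : Finset V => if Xor (u ∈ S) (v ∈ S) then (1 : ℝ) else 0)
          (fun S _ => by split_ifs <;> norm_num) (Finset.mem_univ _)

variable [DecidableRel G.Adj]

/-- `2 |δ(S)|`: every edge of the cut is counted once in each direction. -/
def cutDartCount (S : Finset V) : ℝ :=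
  ∑ u, ∑ v, if G.Adj u v ∧ Xor (u ∈ S) (v ∈ S) then 1 else 0

theorem signVector_dotProduct_lapMatrix_mulVec (S : Finset V) :
    S.signVector ⬝ᵥ (G.lapMatrix ℝ *ᵥ S.signVector) = 2 * G.cutDartCount S := by
  have hterm : ∀ u v, (if G.Adj u v then (S.signVector u - S.signVector v) ^ 2 else 0) =
      4 * if G.Adj u v ∧ Xor (u ∈ S) (v ∈ S) then 1 else 0 := by
    intro u v
    unfold Finset.signVector
    by_cases h : G.Adj u v <;> by_cases hu : u ∈ S <;> by_cases hv : v ∈ S <;>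
      simp [h, hu, hv] <;> norm_num
  rw [← toLinearMap₂'_apply', lapMatrix_toLinearMap₂']
  simp only [hterm, ← Finset.mul_sum, cutDartCount]
  ring

variable {G}

theorem IsRegularOfDegree.two_mul_cutDartCount_le {k : ℕ} (hreg : G.IsRegularOfDegree k)
    (hA : (G.adjMatrix ℝ).IsHermitian) (S : Finset V) :
    2 * G.cutDartCount S ≤ Fintype.card V * (k - ⨅ i, hA.eigenvalues i) := by
  have hdeg : S.signVector ⬝ᵥ (G.degMatrix ℝ *ᵥ S.signVector) = Fintype.card V * k := by
    simp only [dotProduct_mulVec_degMatrix, hreg.degree_eq, mul_assoc, Finset.signVector_mul_self]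
    simp [mul_comm]
  have hray := hA.iInf_eigenvalues_mul_dotProduct_self_le S.signVector
  rw [Finset.signVector_dotProduct_self] at hray
  rw [← signVector_dotProduct_lapMatrix_mulVec, lapMatrix, sub_mulVec, dotProduct_sub, hdeg]
  linarith

theorem IsFractionalCutCover.card_mul_le_sum_mul_cutDartCount {y : Finset V → ℝ}
    (hy : G.IsFractionalCutCover y) {k : ℕ} (hreg : G.IsRegularOfDegree k) :
    Fintype.card V * (k : ℝ) ≤ ∑ S, y S * G.cutDartCount S := by
  have hedge : ∀ u v, (if G.Adj u v then 1 else 0 : ℝ) ≤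
      ∑ S : Finset V, if G.Adj u v ∧ Xor (u ∈ S) (v ∈ S) then y S else 0 := by
    intro u v
    by_cases h : G.Adj u v
    · simpa [h] using hy.2 u v h
    · simp [h]
  calc Fintype.card V * (k : ℝ) = ∑ u, ∑ v, if G.Adj u v then (1 : ℝ) else 0 := by
        simp only [← degree_eq_sum_if_adj, hreg.degree_eq, Finset.sum_const, Finset.card_univ,
          nsmul_eq_mul]
    _ ≤ ∑ u, ∑ v, ∑ S : Finset V, if G.Adj u v ∧ Xor (u ∈ S) (v ∈ S) then y S else 0 :=
        Finset.sum_le_sum fun u _ => Finset.sum_le_sum fun v _ => hedge u v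
    _ = ∑ S, y S * G.cutDartCount S := by
        simp only [cutDartCount, Finset.mul_sum, mul_ite, mul_one, mul_zero]
        exact (Finset.sum_congr rfl fun _ _ => Finset.sum_comm).trans Finset.sum_comm

theorem IsFractionalCutCover.two_mul_div_le_sum [Nonempty V] {y : Finset V → ℝ}
    (hy : G.IsFractionalCutCover y) {k : ℕ} (hreg : G.IsRegularOfDegree k)
    (hA : (G.adjMatrix ℝ).IsHermitian) (hlt : (⨅ i, hA.eigenvalues i) < k) :
    2 * (k : ℝ) / (k - ⨅ i, hA.eigenvalues i) ≤ ∑ S, y S := by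
  have hn : (0 : ℝ) < Fintype.card V := by exact_mod_cast Fintype.card_pos
  have hcover := hy.card_mul_le_sum_mul_cutDartCount hreg
  have hcut : ∑ S, y S * G.cutDartCount S ≤
      (∑ S, y S) * (Fintype.card V * (k - ⨅ i, hA.eigenvalues i) / 2) := by
    rw [Finset.sum_mul]
    refine Finset.sum_le_sum fun S _ => mul_le_mul_of_nonneg_left ?_ (hy.1 S)
    linarith [hreg.two_mul_cutDartCount_le hA S]
  rw [div_le_iff₀ (sub_pos.mpr hlt)]
  nlinarith

end SimpleGraph

theorem fcc_ge_of_association_scheme_general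
    {V : Type*} [Fintype V] [DecidableEq V]
    [Nonempty V]
    (G : SimpleGraph V) [DecidableRel G.Adj]
    (k : ℕ) (hreg : G.IsRegularOfDegree k)
    (hherm : (G.adjMatrix ℝ).IsHermitian)
    (hlam : (⨅ i, hherm.eigenvalues i) < k) :
    2 * (k : ℝ) / ((k : ℝ) - ⨅ i, hherm.eigenvalues i) ≤
      sInf {t : ℝ | ∃ y : Finset V → ℝ, (∀ S, 0 ≤ y S) ∧
        (∀ u v, G.Adj u v →
          1 ≤ ∑ S : Finset V, if Xor (u ∈ S) (v ∈ S) then y S else 0) ∧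
        t = ∑ S : Finset V, y S} := by
  refine le_csInf ⟨_, 1, G.isFractionalCutCover_one.1, G.isFractionalCutCover_one.2, rfl⟩ ?_
  rintro _ ⟨y, hy0, hycut, rfl⟩
  exact SimpleGraph.IsFractionalCutCover.two_mul_div_le_sum ⟨hy0, hycut⟩ hreg hherm hlam

/-- Let `G` be a `k`-regular graph on `n` vertices whose adjacency matrix belongs to a
symmetric association scheme, with smallest adjacency eigenvalue `λ_min < k`. Then the
fractional cut-cover number
`fcc(G) = min {Σ_S y S : y ≥ 0, Σ_S y S · 1_{δ(S)} ≥ 1 entrywise on edges}`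
satisfies `fcc(G) ≥ 2 k / (k - λ_min)`. -/
theorem fcc_ge_of_association_scheme
    {V : Type*} [Fintype V] [DecidableEq V] (d : ℕ)
    (A E : Fin (d + 1) → Matrix V V ℝ)
    (P Q : Matrix (Fin (d + 1)) (Fin (d + 1)) ℝ)
    (hA0 : A 0 = 1)
    (hAsym : ∀ i, (A i)ᵀ = A i)
    (hA01 : ∀ i u v, A i u v = 0 ∨ A i u v = 1)
    (hAsum : ∀ u v, ∑ i, A i u v = 1)
    (hAne : ∀ i, A i ≠ 0)
    (hAmul : ∀ i j, A i * A j ∈ Submodule.span ℝ (Set.range A))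
    (hAcomm : ∀ i j, A i * A j = A j * A i)
    (hE0 : E 0 = (Fintype.card V : ℝ)⁻¹ • Matrix.of (fun _ _ => (1 : ℝ)))
    (hEsym : ∀ i, (E i)ᵀ = E i)
    (hEmul : ∀ i j, E i * E j = if i = j then E i else 0)
    (hEsum : ∑ i, E i = 1)
    (hEne : ∀ i, E i ≠ 0)
    (hP : ∀ i, A i = ∑ l, P l i • E l)
    (hQ : ∀ i, E i = (Fintype.card V : ℝ)⁻¹ • ∑ l, Q l i • A l)
    [Nonempty V]
    (G : SimpleGraph V) [DecidableRel G.Adj]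
    (k : ℕ) (hreg : G.IsRegularOfDegree k)
    (i₁ : Fin (d + 1)) (hi₁ : G.adjMatrix ℝ = A i₁)
    (hherm : (G.adjMatrix ℝ).IsHermitian)
    (hlam : (⨅ i, hherm.eigenvalues i) < k) :
    2 * (k : ℝ) / ((k : ℝ) - ⨅ i, hherm.eigenvalues i) ≤
      sInf {t : ℝ | ∃ y : Finset V → ℝ, (∀ S, 0 ≤ y S) ∧
        (∀ u v, G.Adj u v →
          1 ≤ ∑ S : Finset V, if Xor (u ∈ S) (v ∈ S) then y S else 0) ∧
        t = ∑ S : Finset V, y S} :=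
  fcc_ge_of_association_scheme_general G k hreg hherm hlam
end
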